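/- arXiv:2011.05484 — 5 statements merged into one kernel-verified Lean document; each statement's English description precedes it below -/
import Mathlib

section
/- Let a, b be coprime positive integers with b odd, and let c, d be integers with ad − bc = 1. Define P = {(k,l) ∈ ℤ² : 1 ≤ k ≤ a−1, 1 ≤ l ≤ b−1, k ≡ l (mod 2)} and Q = {m ∈ ℤ : 1 ≤ m ≤ ab−1, a ∤ m, b ∤ m}. Define Γ₊(k,l) = (adl − bck) mod ab and Γ₋(k,l) = (−adl − bck) mod ab, where 'mod ab' denotes the residue in [0, ab). Then Γ₊ and Γ₋ are injective maps from P to Q with disjoint images, and Q is the disjoint union of Γ₊(P) and Γ₋(P). -/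
open Finset

private lemma modab_left (a b X r : ℤ) (hr : 0 ≤ r) (hr' : r < a)
    (h : a ∣ X - r) : X % (a * b) % a = r := by
  rw [Int.emod_emod_of_dvd X (Dvd.intro b rfl)]
  have hm : r ≡ X [ZMOD a] := Int.modEq_iff_dvd.mpr h
  rw [Int.ModEq] at hm
  rw [← hm, Int.emod_eq_of_lt hr hr']

private lemma modab_right (a b X r : ℤ) (hr : 0 ≤ r) (hr' : r < b)
    (h : b ∣ X - r) : X % (a * b) % b = r := by
  rw [Int.emod_emod_of_dvd X (dvd_mul_left b a)]
  have hm : r ≡ X [ZMOD b] := Int.modEq_iff_dvd.mpr h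
  rw [Int.ModEq] at hm
  rw [← hm, Int.emod_eq_of_lt hr hr']

private lemma crt_unique (a b x y : ℤ) (hcop : IsCoprime a b)
    (hx0 : 0 ≤ x) (hx1 : x < a * b) (hy0 : 0 ≤ y) (hy1 : y < a * b)
    (hxa : x % a = y % a) (hxb : x % b = y % b) : x = y := by
  have h1 : a ∣ y - x := (Int.ModEq.dvd (hxa : x ≡ y [ZMOD a]))
  have h2 : b ∣ y - x := (Int.ModEq.dvd (hxb : x ≡ y [ZMOD b]))
  have h3 : a * b ∣ y - x := hcop.mul_dvd h1 h2
  have h4 : y - x = 0 := Int.eq_zero_of_abs_lt_dvd h3 (by rw [abs_lt]; constructor <;> linarith)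
  linarith

/-- Let `a, b` be coprime positive integers with `b` odd, and `c, d` integers with
`a*d - b*c = 1`.  With
`P = {(k,l) : 1 ≤ k ≤ a-1, 1 ≤ l ≤ b-1, k ≡ l (mod 2)}`,
`Q = {m : 1 ≤ m ≤ ab-1, a ∤ m, b ∤ m}`,
`Γ₊(k,l) = (a*d*l - b*c*k) mod ab` and `Γ₋(k,l) = (-a*d*l - b*c*k) mod ab`,
the maps `Γ₊, Γ₋` are injective on `P`, have disjoint images in `Q`, and `Q` is the
disjoint union of the two images. -/
theorem Gamma_pm_decomposition (a b c d : ℤ) (ha : 0 < a) (hb : 0 < b)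
    (hcop : IsCoprime a b) (hbodd : Odd b) (hcd : a * d - b * c = 1) :
    let P : Finset (ℤ × ℤ) :=
      (Finset.Icc 1 (a - 1) ×ˢ Finset.Icc 1 (b - 1)).filter
        (fun q => q.1 % 2 = q.2 % 2)
    let Q : Finset ℤ :=
      (Finset.Icc 1 (a * b - 1)).filter (fun m => ¬ a ∣ m ∧ ¬ b ∣ m)
    let Γp : ℤ × ℤ → ℤ := fun q => (a * d * q.2 - b * c * q.1) % (a * b)
    let Γm : ℤ × ℤ → ℤ := fun q => (-(a * d * q.2) - b * c * q.1) % (a * b)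
    Set.InjOn Γp ↑P ∧ Set.InjOn Γm ↑P ∧
      Disjoint (P.image Γp) (P.image Γm) ∧
      P.image Γp ∪ P.image Γm = Q := by
  intro P Q Γp Γm
  have hab : 0 < a * b := mul_pos ha hb
  have hbo : b % 2 = 1 := Int.odd_iff.mp hbodd
  -- membership in P unpacked
  have hPmem : ∀ q : ℤ × ℤ, q ∈ P ↔
      (1 ≤ q.1 ∧ q.1 ≤ a - 1 ∧ 1 ≤ q.2 ∧ q.2 ≤ b - 1 ∧ q.1 % 2 = q.2 % 2) := by
    intro q
    simp only [P, Finset.mem_filter, Finset.mem_product, Finset.mem_Icc]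
    tauto
  -- mod computations
  have hpa : ∀ q : ℤ × ℤ, q ∈ P → Γp q % a = q.1 := by
    intro q hq
    obtain ⟨h1, h2, h3, h4, h5⟩ := (hPmem q).mp hq
    exact modab_left a b _ _ (by linarith) (by linarith)
      ⟨d * (q.2 - q.1), by linear_combination q.1 * hcd⟩
  have hpb : ∀ q : ℤ × ℤ, q ∈ P → Γp q % b = q.2 := by
    intro q hq
    obtain ⟨h1, h2, h3, h4, h5⟩ := (hPmem q).mp hq
    exact modab_right a b _ _ (by linarith) (by linarith)
      ⟨c * (q.2 - q.1), by linear_combination q.2 * hcd⟩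
  have hma : ∀ q : ℤ × ℤ, q ∈ P → Γm q % a = q.1 := by
    intro q hq
    obtain ⟨h1, h2, h3, h4, h5⟩ := (hPmem q).mp hq
    exact modab_left a b _ _ (by linarith) (by linarith)
      ⟨-(d * (q.2 + q.1)), by linear_combination q.1 * hcd⟩
  have hmb : ∀ q : ℤ × ℤ, q ∈ P → Γm q % b = b - q.2 := by
    intro q hq
    obtain ⟨h1, h2, h3, h4, h5⟩ := (hPmem q).mp hq
    exact modab_right a b _ _ (by linarith) (by linarith)
      ⟨-(c * (q.2 + q.1)) - 1, by linear_combination (-q.2) * hcd⟩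
  have hrange : ∀ X : ℤ, 0 ≤ X % (a * b) ∧ X % (a * b) < a * b := by
    intro X
    exact ⟨Int.emod_nonneg X (by positivity), Int.emod_lt_of_pos X hab⟩
  -- images land in Q
  have hQmem : ∀ m : ℤ, m ∈ Q ↔ (1 ≤ m ∧ m ≤ a * b - 1 ∧ ¬ a ∣ m ∧ ¬ b ∣ m) := by
    intro m
    simp only [Q, Finset.mem_filter, Finset.mem_Icc]
    tauto
  have himage : ∀ m : ℤ, 0 ≤ m → m < a * b →
      (1 ≤ m % a) → (1 ≤ m % b) → m ∈ Q := by
    intro m h0 h1 h2 h3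
    refine (hQmem m).mpr ⟨?_, by linarith, ?_, ?_⟩
    · rcases eq_or_lt_of_le h0 with h | h
      · exfalso; rw [← h] at h2; simp at h2
      · linarith
    · intro hdvd
      rw [Int.emod_eq_zero_of_dvd hdvd] at h2; linarith
    · intro hdvd
      rw [Int.emod_eq_zero_of_dvd hdvd] at h3; linarith
  have hpQ : ∀ q : ℤ × ℤ, q ∈ P → Γp q ∈ Q := by
    intro q hq
    obtain ⟨h1, h2, h3, h4, h5⟩ := (hPmem q).mp hq
    exact himage _ (hrange _).1 (hrange _).2 (by rw [hpa q hq]; linarith)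
      (by rw [hpb q hq]; linarith)
  have hmQ : ∀ q : ℤ × ℤ, q ∈ P → Γm q ∈ Q := by
    intro q hq
    obtain ⟨h1, h2, h3, h4, h5⟩ := (hPmem q).mp hq
    exact himage _ (hrange _).1 (hrange _).2 (by rw [hma q hq]; linarith)
      (by rw [hmb q hq]; linarith)
  refine ⟨?_, ?_, ?_, ?_⟩
  · -- InjOn Γp
    intro q hq q' hq' h
    rw [Finset.mem_coe] at hq hq'
    have e1 : q.1 = q'.1 := by rw [← hpa q hq, ← hpa q' hq', h]
    have e2 : q.2 = q'.2 := by rw [← hpb q hq, ← hpb q' hq', h]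
    exact Prod.ext e1 e2
  · -- InjOn Γm
    intro q hq q' hq' h
    rw [Finset.mem_coe] at hq hq'
    have e1 : q.1 = q'.1 := by rw [← hma q hq, ← hma q' hq', h]
    have e2 : q.2 = q'.2 := by
      have t1 := hmb q hq
      have t2 := hmb q' hq'
      rw [h] at t1; omega
    exact Prod.ext e1 e2
  · -- Disjoint
    rw [Finset.disjoint_left]
    intro m hm hm'
    obtain ⟨q, hq, hqm⟩ := Finset.mem_image.mp hm
    obtain ⟨q', hq', hqm'⟩ := Finset.mem_image.mp hm'
    obtain ⟨h1, h2, h3, h4, h5⟩ := (hPmem q).mp hq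
    obtain ⟨h1', h2', h3', h4', h5'⟩ := (hPmem q').mp hq'
    have ea : q.1 = q'.1 := by rw [← hpa q hq, ← hma q' hq', hqm, hqm']
    have eb : q.2 = b - q'.2 := by rw [← hpb q hq, ← hmb q' hq', hqm, hqm']
    omega
  · -- Union equals Q
    ext m
    constructor
    · intro hm
      rcases Finset.mem_union.mp hm with h | h
      · obtain ⟨q, hq, hqm⟩ := Finset.mem_image.mp h
        rw [← hqm]; exact hpQ q hq
      · obtain ⟨q, hq, hqm⟩ := Finset.mem_image.mp h
        rw [← hqm]; exact hmQ q hq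
    · intro hm
      obtain ⟨h1, h2, h3, h4⟩ := (hQmem m).mp hm
      set k := m % a with hk
      set l0 := m % b with hl0
      have hk0 : 0 ≤ k := Int.emod_nonneg m (by linarith)
      have hka : k < a := Int.emod_lt_of_pos m ha
      have hl00 : 0 ≤ l0 := Int.emod_nonneg m (by linarith)
      have hl0b : l0 < b := Int.emod_lt_of_pos m hb
      have hk1 : 1 ≤ k := by
        rcases eq_or_lt_of_le hk0 with h | h
        · exact absurd (Int.dvd_of_emod_eq_zero h.symm) h3
        · linarith
      have hl01 : 1 ≤ l0 := by
        rcases eq_or_lt_of_le hl00 with h | h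
        · exact absurd (Int.dvd_of_emod_eq_zero h.symm) h4
        · linarith
      by_cases hpar : k % 2 = l0 % 2
      · -- m = Γp (k, l0)
        have hqP : ((k, l0) : ℤ × ℤ) ∈ P := (hPmem _).mpr
          ⟨hk1, by show k ≤ a - 1; linarith, hl01, by show l0 ≤ b - 1; linarith,
            by show k % 2 = l0 % 2; exact hpar⟩
        have : Γp (k, l0) = m := by
          refine crt_unique a b _ _ hcop (hrange _).1 (hrange _).2 (by linarith)
            (by linarith) ?_ ?_
          · rw [hpa _ hqP]
          · rw [hpb _ hqP]
        exact Finset.mem_union.mpr (Or.inl (Finset.mem_image.mpr ⟨_, hqP, this⟩))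
      · -- m = Γm (k, b - l0)
        have hqP : ((k, b - l0) : ℤ × ℤ) ∈ P := (hPmem _).mpr
          ⟨hk1, by show k ≤ a - 1; linarith, by show (1:ℤ) ≤ b - l0; linarith,
            by show b - l0 ≤ b - 1; linarith, by show k % 2 = (b - l0) % 2; omega⟩
        have : Γm (k, b - l0) = m := by
          refine crt_unique a b _ _ hcop (hrange _).1 (hrange _).2 (by linarith)
            (by linarith) ?_ ?_
          · rw [hma _ hqP]
          · rw [hmb _ hqP]; show b - (b - l0) = m % b; rw [← hl0]; ring
        exact Finset.mem_union.mpr (Or.inr (Finset.mem_image.mpr ⟨_, hqP, this⟩))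
end

section
/- Let a, b be coprime positive integers with b odd. Then the image of Γ₊ is exactly the set Q₊ = {m ∈ Q : (m mod a) ≡ (m mod b) (mod 2)} and the image of Γ₋ is exactly Q₋ = {m ∈ Q : (m mod a) ≢ (m mod b) (mod 2)}, where Q = {m ∈ ℤ : 1 ≤ m ≤ ab−1, a ∤ m, b ∤ m} and Γ±(k,l) = (±adl − bck) mod ab for (k,l) in P = {(k,l) : 1 ≤ k ≤ a−1, 1 ≤ l ≤ b−1, k ≡ l (mod 2)}. -/
open Finset

private lemma eq_of_small_resid (a b x y : ℤ) (hcop : IsCoprime a b)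
    (hx : 0 ≤ x) (hx' : x < a * b) (hy : 0 ≤ y) (hy' : y < a * b)
    (h1 : a ∣ x - y) (h2 : b ∣ x - y) : x = y := by
  have h := hcop.mul_dvd h1 h2
  have := Int.eq_zero_of_abs_lt_dvd h (by rw [abs_lt]; omega)
  omega

/-- Let `a, b` be coprime positive integers with `b` odd, `c, d` integers with
`a*d - b*c = 1`.  Then the image of `Γ₊` on `P` is exactly
`Q₊ = {m ∈ Q : (m mod a) ≡ (m mod b) (mod 2)}` and the image of `Γ₋` is exactly
`Q₋ = {m ∈ Q : (m mod a) ≢ (m mod b) (mod 2)}`. -/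
theorem Gamma_pm_images (a b c d : ℤ) (ha : 0 < a) (hb : 0 < b)
    (hcop : IsCoprime a b) (hbodd : Odd b) (hcd : a * d - b * c = 1) :
    let P : Finset (ℤ × ℤ) :=
      (Finset.Icc 1 (a - 1) ×ˢ Finset.Icc 1 (b - 1)).filter
        (fun q => q.1 % 2 = q.2 % 2)
    let Q : Finset ℤ :=
      (Finset.Icc 1 (a * b - 1)).filter (fun m => ¬ a ∣ m ∧ ¬ b ∣ m)
    let Γp : ℤ × ℤ → ℤ := fun q => (a * d * q.2 - b * c * q.1) % (a * b)
    let Γm : ℤ × ℤ → ℤ := fun q => (-(a * d * q.2) - b * c * q.1) % (a * b)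
    P.image Γp = Q.filter (fun m => m % a % 2 = m % b % 2) ∧
      P.image Γm = Q.filter (fun m => m % a % 2 ≠ m % b % 2) := by
  intro P Q Γp Γm
  have hab : 0 < a * b := mul_pos ha hb
  have hb2 : b % 2 = 1 := Int.odd_iff.mp hbodd
  have resa : ∀ k l : ℤ, (a * d * l - b * c * k) % (a * b) % a = k % a := by
    intro k l
    rw [Int.emod_emod_of_dvd _ (dvd_mul_right a b)]
    have h : a * d * l - b * c * k = k + a * (d * (l - k)) := by
      linear_combination k * hcd
    rw [h, Int.add_mul_emod_self_left]
  have resb : ∀ k l : ℤ, (a * d * l - b * c * k) % (a * b) % b = l % b := by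
    intro k l
    rw [Int.emod_emod_of_dvd _ (dvd_mul_left b a)]
    have h : a * d * l - b * c * k = l + b * (c * (l - k)) := by
      linear_combination l * hcd
    rw [h, Int.add_mul_emod_self_left]
  have resma : ∀ k l : ℤ, (-(a * d * l) - b * c * k) % (a * b) % a = k % a := by
    intro k l
    rw [Int.emod_emod_of_dvd _ (dvd_mul_right a b)]
    have h : -(a * d * l) - b * c * k = k + a * (-(d * (l + k))) := by
      linear_combination k * hcd
    rw [h, Int.add_mul_emod_self_left]
  have resmb : ∀ k l : ℤ, (-(a * d * l) - b * c * k) % (a * b) % b = (-l) % b := by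
    intro k l
    rw [Int.emod_emod_of_dvd _ (dvd_mul_left b a)]
    have h : -(a * d * l) - b * c * k = -l + b * (-(c * (l + k))) := by
      linear_combination (-l) * hcd
    rw [h, Int.add_mul_emod_self_left]
  have negmod : ∀ l : ℤ, 1 ≤ l → l ≤ b - 1 → (-l) % b = b - l := by
    intro l h1 h2
    have h : (-l) % b = (b - l) % b := by
      rw [show b - l = -l + b * 1 by ring, Int.add_mul_emod_self_left]
    rw [h, Int.emod_eq_of_lt (by omega) (by omega)]
  -- membership characterization helpers
  have memP : ∀ k l : ℤ, (k, l) ∈ P ↔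
      (1 ≤ k ∧ k ≤ a - 1) ∧ (1 ≤ l ∧ l ≤ b - 1) ∧ k % 2 = l % 2 := by
    intro k l
    simp [P, Finset.mem_filter, Finset.mem_product, Finset.mem_Icc, and_assoc]
  have memQ : ∀ m : ℤ, m ∈ Q ↔ (1 ≤ m ∧ m ≤ a * b - 1) ∧ ¬ a ∣ m ∧ ¬ b ∣ m := by
    intro m
    simp [Q, Finset.mem_filter, Finset.mem_Icc]
  constructor
  · ext m
    simp only [Finset.mem_image, Finset.mem_filter]
    constructor
    · rintro ⟨⟨k, l⟩, hkl, rfl⟩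
      rw [memP] at hkl
      obtain ⟨⟨hk1, hk2⟩, ⟨hl1, hl2⟩, hpar⟩ := hkl
      set m := Γp (k, l) with hm
      have hma : m % a = k := by
        rw [hm]; show (a * d * l - b * c * k) % (a * b) % a = k
        rw [resa k l, Int.emod_eq_of_lt (by omega) (by omega)]
      have hmb : m % b = l := by
        rw [hm]; show (a * d * l - b * c * k) % (a * b) % b = l
        rw [resb k l, Int.emod_eq_of_lt (by omega) (by omega)]
      have h0 : 0 ≤ m := Int.emod_nonneg _ (by omega)
      have h1 : m < a * b := Int.emod_lt_of_pos _ hab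
      refine ⟨(memQ m).mpr ⟨⟨?_, by omega⟩, ?_, ?_⟩, ?_⟩
      · rcases eq_or_lt_of_le h0 with h | h
        · exfalso; rw [← h] at hma; simp at hma; omega
        · omega
      · intro hdvd; rw [Int.emod_eq_zero_of_dvd hdvd] at hma; omega
      · intro hdvd; rw [Int.emod_eq_zero_of_dvd hdvd] at hmb; omega
      · rw [hma, hmb]; exact hpar
    · rintro ⟨hmQ, hpar⟩
      rw [memQ] at hmQ
      obtain ⟨⟨hm1, hm2⟩, hna, hnb⟩ := hmQ
      have hka : 0 ≤ m % a := Int.emod_nonneg _ (by omega)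
      have hka' : m % a < a := Int.emod_lt_of_pos _ ha
      have hkb : 0 ≤ m % b := Int.emod_nonneg _ (by omega)
      have hkb' : m % b < b := Int.emod_lt_of_pos _ hb
      have hka0 : m % a ≠ 0 := fun h => hna (Int.dvd_of_emod_eq_zero h)
      have hkb0 : m % b ≠ 0 := fun h => hnb (Int.dvd_of_emod_eq_zero h)
      refine ⟨(m % a, m % b), (memP _ _).mpr ⟨⟨by omega, by omega⟩,
        ⟨by omega, by omega⟩, hpar⟩, ?_⟩
      set x := Γp (m % a, m % b) with hx
      have hxa : x % a = m % a := by
        rw [hx]; show (a * d * (m % b) - b * c * (m % a)) % (a * b) % a = m % a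
        rw [resa, Int.emod_emod_of_dvd _ dvd_rfl]
      have hxb : x % b = m % b := by
        rw [hx]; show (a * d * (m % b) - b * c * (m % a)) % (a * b) % b = m % b
        rw [resb, Int.emod_emod_of_dvd _ dvd_rfl]
      exact eq_of_small_resid a b x m hcop (Int.emod_nonneg _ (by omega))
        (Int.emod_lt_of_pos _ hab) (by omega) (by omega)
        (Int.dvd_of_emod_eq_zero
          (Int.emod_eq_emod_iff_emod_sub_eq_zero.mp hxa))
        (Int.dvd_of_emod_eq_zero
          (Int.emod_eq_emod_iff_emod_sub_eq_zero.mp hxb))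
  · ext m
    simp only [Finset.mem_image, Finset.mem_filter]
    constructor
    · rintro ⟨⟨k, l⟩, hkl, rfl⟩
      rw [memP] at hkl
      obtain ⟨⟨hk1, hk2⟩, ⟨hl1, hl2⟩, hpar⟩ := hkl
      set m := Γm (k, l) with hm
      have hma : m % a = k := by
        rw [hm]; show (-(a * d * l) - b * c * k) % (a * b) % a = k
        rw [resma k l, Int.emod_eq_of_lt (by omega) (by omega)]
      have hmb : m % b = b - l := by
        rw [hm]; show (-(a * d * l) - b * c * k) % (a * b) % b = b - l
        rw [resmb k l, negmod l hl1 hl2]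
      have h0 : 0 ≤ m := Int.emod_nonneg _ (by omega)
      have h1 : m < a * b := Int.emod_lt_of_pos _ hab
      refine ⟨(memQ m).mpr ⟨⟨?_, by omega⟩, ?_, ?_⟩, ?_⟩
      · rcases eq_or_lt_of_le h0 with h | h
        · exfalso; rw [← h] at hma; simp at hma; omega
        · omega
      · intro hdvd; rw [Int.emod_eq_zero_of_dvd hdvd] at hma; omega
      · intro hdvd; rw [Int.emod_eq_zero_of_dvd hdvd] at hmb; omega
      · rw [hma, hmb]; omega
    · rintro ⟨hmQ, hpar⟩
      rw [memQ] at hmQ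
      obtain ⟨⟨hm1, hm2⟩, hna, hnb⟩ := hmQ
      have hka : 0 ≤ m % a := Int.emod_nonneg _ (by omega)
      have hka' : m % a < a := Int.emod_lt_of_pos _ ha
      have hkb : 0 ≤ m % b := Int.emod_nonneg _ (by omega)
      have hkb' : m % b < b := Int.emod_lt_of_pos _ hb
      have hka0 : m % a ≠ 0 := fun h => hna (Int.dvd_of_emod_eq_zero h)
      have hkb0 : m % b ≠ 0 := fun h => hnb (Int.dvd_of_emod_eq_zero h)
      refine ⟨(m % a, b - m % b), (memP _ _).mpr ⟨⟨by omega, by omega⟩,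
        ⟨by omega, by omega⟩, by omega⟩, ?_⟩
      set x := Γm (m % a, b - m % b) with hx
      have hxa : x % a = m % a := by
        rw [hx]
        show (-(a * d * (b - m % b)) - b * c * (m % a)) % (a * b) % a = m % a
        rw [resma, Int.emod_emod_of_dvd _ dvd_rfl]
      have hxb : x % b = m % b := by
        rw [hx]
        show (-(a * d * (b - m % b)) - b * c * (m % a)) % (a * b) % b = m % b
        rw [resmb, negmod (b - m % b) (by omega) (by omega)]
        omega
      exact eq_of_small_resid a b x m hcop (Int.emod_nonneg _ (by omega))
        (Int.emod_lt_of_pos _ hab) (by omega) (by omega)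
        (Int.dvd_of_emod_eq_zero
          (Int.emod_eq_emod_iff_emod_sub_eq_zero.mp hxa))
        (Int.dvd_of_emod_eq_zero
          (Int.emod_eq_emod_iff_emod_sub_eq_zero.mp hxb))
end

section
/- Let a, b be coprime positive integers, c, d integers with ad − bc = 1, and k, l, k', l' integers. If c', d' are another pair of integers with ad' − bc' = 1 and k ≡ l (mod 2), then (adl − bck)² ≡ (ad'l − bc'k)² (mod 4ab). -/
/-- Let `a, b` be coprime positive integers, `c, d` and `c', d'` integers with
`a*d - b*c = 1` and `a*d' - b*c' = 1`, and `k, l` integers with `k ≡ l (mod 2)`.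
Then `(a*d*l - b*c*k)² ≡ (a*d'*l - b*c'*k)² (mod 4ab)`. -/
theorem sq_modeq_of_two_unimodular (a b c d c' d' k l : ℤ)
    (ha : 0 < a) (hb : 0 < b) (hcop : IsCoprime a b)
    (hcd : a * d - b * c = 1) (hcd' : a * d' - b * c' = 1)
    (hkl : k % 2 = l % 2) :
    (a * d * l - b * c * k) ^ 2 ≡ (a * d' * l - b * c' * k) ^ 2 [ZMOD (4 * a * b)] := by
  obtain ⟨e, he⟩ : (2 : ℤ) ∣ l - k := by omega
  have hdvd : b ∣ a * (d - d') := ⟨c - c', by ring_nf; linarith⟩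
  obtain ⟨m, hm⟩ : b ∣ d - d' := hcop.symm.dvd_of_dvd_mul_left hdvd
  have hcm : c - c' = a * m := by
    have h2 : b * (c - c') = b * (a * m) := by
      have : a * (d - d') = b * (c - c') := by ring_nf; linarith
      rw [hm] at this; linarith [this]
    exact mul_left_cancel₀ hb.ne' h2
  have hl : l = k + 2 * e := by linarith
  have hd' : d' = d - b * m := by linarith
  have hc' : c' = c - a * m := by linarith
  subst hl hd' hc'
  refine Int.ModEq.symm (Int.modEq_iff_dvd.mpr ⟨m * e * (k + 2 * a * d * e - a * b * m * e), ?_⟩)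
  linear_combination (4 * a * b * k * e * m) * hcd
end

section
/- Let a and b be coprime positive integers with ab even, and let n ≥ 3 be odd. Then Σ over even m with 0 ≤ m ≤ 2ab of sin(mπ/a)·sin(mπ/b)·exp(−n·m²·πi/(4ab)) = 0. -/
/-!
After the substitution `m = 2k` the summand becomes
`f k = sin (2πk/a) · sin (2πk/b) · exp (-π i n k² / (ab))`, which has period `ab` because `ab`
is even, and the extra term `f (ab) = f 0` vanishes; so the sum is the sum of `f` over `ℤ/ab`.
From a Bézout relation `xa + yb = 1` put `u = xa - yb`: then `u ≡ -1 (mod a)`, `u ≡ 1 (mod b)`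
and `u² ≡ 1 (mod 2ab)`, whence `f (uk) = -f k`. Since `k ↦ uk` permutes `ℤ/ab`, the sum equals
its own negative.
-/

open Finset Complex
open scoped Real

theorem Finset.sum_range_filter_even {M : Type*} [AddCommMonoid M] (N : ℕ) (g : ℕ → M) :
    ∑ m ∈ (range (2 * N + 1)).filter Even, g m = ∑ k ∈ range (N + 1), g (2 * k) := by
  refine Finset.sum_nbij' (· / 2) (2 * ·) ?_ ?_ ?_ ?_ ?_ <;> intro m hm <;>
    simp only [mem_filter, mem_range, Nat.even_iff] at hm ⊢
  · omega
  · omega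
  · omega
  · omega
  · rw [Nat.mul_div_cancel' (Nat.dvd_of_mod_eq_zero hm.2)]

theorem ZMod.sum_val_eq_sum_range {M : Type*} [AddCommMonoid M] (N : ℕ) [NeZero N]
    (g : ℕ → M) : ∑ x : ZMod N, g x.val = ∑ k ∈ range N, g k :=
  Finset.sum_nbij' ZMod.val (↑) (fun x _ => mem_range.2 x.val_lt) (fun _ _ => mem_univ _)
    (fun x _ => ZMod.natCast_zmod_val x) (fun _ hk => ZMod.val_natCast_of_lt (mem_range.1 hk))
    (fun _ _ => rfl)

namespace Function.Periodic

variable {M : Type*} {f : ℤ → M} {N : ℕ}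

theorem apply_val_intCast [NeZero N] (hf : Periodic f N) (k : ℤ) :
    f (k : ZMod N).val = f k := by
  rw [ZMod.val_intCast, Int.emod_def, mul_comm]
  exact hf.sub_int_mul_eq (k / N)

theorem sum_range_comp_mul [AddCommMonoid M] (hf : Periodic f N) {u : ℤ} (hu : IsCoprime u N) :
    ∑ k ∈ range N, f (u * k) = ∑ k ∈ range N, f k := by
  rcases N.eq_zero_or_pos with rfl | hN
  · simp
  have : NeZero N := ⟨hN.ne'⟩
  obtain ⟨v, hv⟩ : IsUnit (u : ZMod N) := (ZMod.coe_int_isUnit_iff_isCoprime u N).2 hu.symm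
  have hmul : ∀ x : ZMod N, f (u * x.val) = f ((v * x : ZMod N).val : ℤ) := fun x => by
    rw [← hf.apply_val_intCast, hv]
    push_cast [ZMod.natCast_zmod_val]
    rfl
  rw [← ZMod.sum_val_eq_sum_range, ← ZMod.sum_val_eq_sum_range]
  simp only [hmul]
  exact Equiv.sum_comp (Units.mulLeft v) (fun y : ZMod N => f (y.val : ℤ))

end Function.Periodic

theorem Real.sin_two_mul_int_mul_pi_div_eq_of_dvd_sub {d : ℕ} {j k : ℤ} (h : (d : ℤ) ∣ j - k) :
    Real.sin (2 * j * π / d) = Real.sin (2 * k * π / d) := by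
  rcases eq_or_ne d 0 with rfl | hd
  · simp
  obtain ⟨t, ht⟩ := h
  rw [eq_comm, Real.sin_eq_sin_iff]
  refine ⟨t, Or.inl ?_⟩
  rw [show (j : ℝ) = k + d * t by exact_mod_cast (by linarith : j = k + d * t)]
  field_simp
  ring

theorem Complex.exp_int_mul_pi_mul_I_div_eq_of_dvd_sub {d : ℕ} {j k : ℤ}
    (h : (2 * d : ℤ) ∣ j - k) : exp (j * π * I / d) = exp (k * π * I / d) := by
  rcases eq_or_ne d 0 with rfl | hd
  · simp
  obtain ⟨t, ht⟩ := h
  rw [Complex.exp_eq_exp_iff_exists_int]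
  refine ⟨t, ?_⟩
  rw [show (j : ℂ) = k + 2 * d * t by exact_mod_cast (by linarith : j = k + 2 * d * t)]
  field_simp

theorem Nat.Coprime.exists_int_dvd_add_one_and_dvd_sub_one {a b : ℕ} (h : Nat.Coprime a b) :
    ∃ u : ℤ, (a : ℤ) ∣ u + 1 ∧ (b : ℤ) ∣ u - 1 ∧ (2 * a * b : ℤ) ∣ u ^ 2 - 1 := by
  obtain ⟨x, y, hxy⟩ := Nat.isCoprime_iff_coprime.2 h
  exact ⟨x * a - y * b, ⟨2 * x, by linear_combination -hxy⟩, ⟨-2 * y, by linear_combination hxy⟩,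
    ⟨-2 * x * y, by linear_combination (x * a + y * b + 1) * hxy⟩⟩

noncomputable def sinSinGaussTerm (a b n : ℕ) (k : ℤ) : ℂ :=
  Real.sin (2 * k * π / a) * Real.sin (2 * k * π / b) * exp (-n * k ^ 2 * π * I / (a * b))

section sinSinGaussTerm

variable {a b : ℕ} (n : ℕ)

theorem sinSinGaussTerm_periodic (hab : Even (a * b)) :
    Function.Periodic (sinSinGaussTerm a b n) (a * b : ℕ) := by
  intro k
  obtain ⟨c, hc⟩ := hab
  have hsin_a := Real.sin_two_mul_int_mul_pi_div_eq_of_dvd_sub (d := a) (j := k + (a * b : ℕ))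
    (k := k) ⟨b, by push_cast; ring⟩
  have hsin_b := Real.sin_two_mul_int_mul_pi_div_eq_of_dvd_sub (d := b) (j := k + (a * b : ℕ))
    (k := k) ⟨a, by push_cast; ring⟩
  have hexp := Complex.exp_int_mul_pi_mul_I_div_eq_of_dvd_sub (d := a * b)
    (j := -n * (k + (a * b : ℕ)) ^ 2) (k := -n * k ^ 2) ⟨-n * (k + c), by push_cast [hc]; ring⟩
  rw [sinSinGaussTerm, sinSinGaussTerm, hsin_a, hsin_b]
  push_cast at hexp ⊢
  rw [hexp]

theorem sinSinGaussTerm_mul_eq_neg {u : ℤ} (hua : (a : ℤ) ∣ u + 1) (hub : (b : ℤ) ∣ u - 1)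
    (hu : (2 * a * b : ℤ) ∣ u ^ 2 - 1) (k : ℤ) :
    sinSinGaussTerm a b n (u * k) = -sinSinGaussTerm a b n k := by
  have hsin_a := Real.sin_two_mul_int_mul_pi_div_eq_of_dvd_sub (d := a) (j := u * k) (k := -k)
    (by rw [sub_neg_eq_add, ← add_one_mul]; exact hua.mul_right k)
  have hsin_b := Real.sin_two_mul_int_mul_pi_div_eq_of_dvd_sub (d := b) (j := u * k) (k := k)
    (by rw [← sub_one_mul]; exact hub.mul_right k)
  have hexp := Complex.exp_int_mul_pi_mul_I_div_eq_of_dvd_sub (d := a * b)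
    (j := -n * (u * k) ^ 2) (k := -n * k ^ 2) (by
      obtain ⟨t, ht⟩ := hu
      exact ⟨-n * k ^ 2 * t, by push_cast; linear_combination (-n * k ^ 2) * ht⟩)
  rw [sinSinGaussTerm, sinSinGaussTerm, hsin_a, hsin_b, Int.cast_neg, mul_neg, neg_mul,
    neg_div, Real.sin_neg]
  push_cast at hexp ⊢
  rw [hexp]
  ring

theorem sum_range_sinSinGaussTerm_eq_zero (hcop : Nat.Coprime a b) (hab : Even (a * b)) :
    ∑ k ∈ range (a * b), sinSinGaussTerm a b n k = 0 := by
  obtain ⟨u, hua, hub, hu⟩ := hcop.exists_int_dvd_add_one_and_dvd_sub_one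
  have hu_coprime : IsCoprime u (a * b : ℕ) := by
    obtain ⟨t, ht⟩ := hu
    exact ⟨u, -2 * t, by push_cast; linear_combination ht⟩
  have h := (sinSinGaussTerm_periodic n hab).sum_range_comp_mul hu_coprime
  simp only [sinSinGaussTerm_mul_eq_neg n hua hub hu, sum_neg_distrib] at h
  exact self_eq_neg.1 h.symm

end sinSinGaussTerm

theorem sum_even_sin_sin_exp_ab_even_general (a b n : ℕ)
    (hcop : Nat.Coprime a b) (hab : Even (a * b)) :
    ∑ m ∈ (Finset.range (2 * a * b + 1)).filter (fun m => Even m),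
        (Real.sin (m * Real.pi / a) * Real.sin (m * Real.pi / b) : ℂ) *
          Complex.exp (-(n : ℂ) * (m : ℂ) ^ 2 * Real.pi * Complex.I / (4 * a * b))
      = 0 := by
  have hterm : ∀ k : ℕ, (Real.sin ((2 * k : ℕ) * π / a) * Real.sin ((2 * k : ℕ) * π / b) : ℂ) *
      exp (-(n : ℂ) * ((2 * k : ℕ) : ℂ) ^ 2 * π * I / (4 * a * b)) = sinSinGaussTerm a b n k := by
    intro k
    rw [sinSinGaussTerm, show -(n : ℂ) * ((2 * k : ℕ) : ℂ) ^ 2 * π * I / (4 * a * b)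
      = 4 * (-n * k ^ 2 * π * I) / (4 * (a * b)) by push_cast; ring,
      mul_div_mul_left _ _ (by norm_num : (4 : ℂ) ≠ 0)]
    push_cast
    ring
  rw [mul_assoc, sum_range_filter_even, sum_range_succ]
  simp only [hterm]
  rw [sum_range_sinSinGaussTerm_eq_zero n hcop hab, zero_add, (sinSinGaussTerm_periodic n hab).eq]
  simp [sinSinGaussTerm]

/-- For coprime positive integers `a, b` with `ab` even and odd `n ≥ 3`,
the sum over even `m` with `0 ≤ m ≤ 2ab` of
`sin(mπ/a)·sin(mπ/b)·exp(-n m² πi/(4ab))` vanishes. -/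
theorem sum_even_sin_sin_exp_ab_even (a b n : ℕ) (ha : 0 < a) (hb : 0 < b)
    (hcop : Nat.Coprime a b) (hab : Even (a * b)) (hodd : Odd n) (hn : 3 ≤ n) :
    ∑ m ∈ (Finset.range (2 * a * b + 1)).filter (fun m => Even m),
        (Real.sin (m * Real.pi / a) * Real.sin (m * Real.pi / b) : ℂ) *
          Complex.exp (-(n : ℂ) * (m : ℂ) ^ 2 * Real.pi * Complex.I / (4 * a * b))
      = 0 :=
  sum_even_sin_sin_exp_ab_even_general a b n hcop hab
end

section
/- Let u, v ∈ ℂ with |u|² + |v|² = 1 and u + conj(u) = 2cos(dθ) for some real θ with sinθ ≠ 0 and sin(dθ) ≠ 0 (d a positive integer). Put s := sin(dθ)/sinθ and t := sin((d−1)θ)/sinθ. Then |v|² + |u + t|² = s². -/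
/-! The condition `u + conj u = 2 cos (dθ)` pins down `Re u`, so `|v|² + |u + t|²` collapses to
`1 + 2 cos (dθ) t + t²`, and this equals `s²` by the sine subtraction formula for
`sin ((d - 1)θ) = sin (dθ - θ)`. -/

theorem Complex.sq_norm_add_ofReal (z : ℂ) (t : ℝ) :
    ‖z + t‖ ^ 2 = ‖z‖ ^ 2 + 2 * z.re * t + t ^ 2 := by
  simp only [Complex.sq_norm, Complex.normSq_apply, Complex.add_re, Complex.add_im,
    Complex.ofReal_re, Complex.ofReal_im, add_zero]
  ring

theorem Real.sin_sq_add_two_mul_cos_mul_sin_sub_add_sq (x θ : ℝ) :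
    Real.sin θ ^ 2 + 2 * Real.cos x * Real.sin θ * Real.sin (x - θ) + Real.sin (x - θ) ^ 2 =
      Real.sin x ^ 2 := by
  rw [Real.sin_sub]
  linear_combination Real.sin x ^ 2 * Real.sin_sq_add_cos_sq θ -
    Real.sin θ ^ 2 * Real.sin_sq_add_cos_sq x

theorem Real.one_add_two_mul_cos_mul_add_sq_eq_sq {x θ : ℝ} (hθ : Real.sin θ ≠ 0) :
    1 + 2 * Real.cos x * (Real.sin (x - θ) / Real.sin θ) + (Real.sin (x - θ) / Real.sin θ) ^ 2 =
      (Real.sin x / Real.sin θ) ^ 2 := by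
  field_simp
  linear_combination Real.sin_sq_add_two_mul_cos_mul_sin_sub_add_sq x θ

theorem su2_norm_identity_general (u v : ℂ) (d : ℕ) (θ : ℝ)
    (hθ : Real.sin θ ≠ 0)
    (huv : ‖u‖ ^ 2 + ‖v‖ ^ 2 = 1)
    (hu : u + (starRingEnd ℂ) u = 2 * Real.cos (d * θ)) :
    let s : ℝ := Real.sin (d * θ) / Real.sin θ
    let t : ℝ := Real.sin (((d : ℝ) - 1) * θ) / Real.sin θ
    ‖v‖ ^ 2 + ‖u + (t : ℂ)‖ ^ 2 = s ^ 2 := by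
  intro s t
  have hre : u.re = Real.cos (d * θ) := by
    rw [Complex.add_conj] at hu
    have h2 : 2 * u.re = 2 * Real.cos (d * θ) := by exact_mod_cast hu
    linarith
  have ht : t = Real.sin (d * θ - θ) / Real.sin θ := by simp only [t, sub_one_mul]
  calc ‖v‖ ^ 2 + ‖u + (t : ℂ)‖ ^ 2 = (‖u‖ ^ 2 + ‖v‖ ^ 2) + 2 * u.re * t + t ^ 2 := by
        rw [Complex.sq_norm_add_ofReal]; ring
    _ = 1 + 2 * Real.cos (d * θ) * t + t ^ 2 := by rw [huv, hre]
    _ = s ^ 2 := by rw [ht]; exact Real.one_add_two_mul_cos_mul_add_sq_eq_sq hθ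

/-- Let `u, v ∈ ℂ` with `|u|² + |v|² = 1` and `u + conj u = 2 cos (dθ)` for a real `θ`
with `sin θ ≠ 0`, `sin (dθ) ≠ 0` (`d` a positive integer).  With
`s = sin(dθ)/sin θ` and `t = sin((d-1)θ)/sin θ`, one has
`|v|² + |u + t|² = s²`. -/
theorem su2_norm_identity (u v : ℂ) (d : ℕ) (hd : 1 ≤ d) (θ : ℝ)
    (hθ : Real.sin θ ≠ 0) (hdθ : Real.sin (d * θ) ≠ 0)
    (huv : ‖u‖ ^ 2 + ‖v‖ ^ 2 = 1)
    (hu : u + (starRingEnd ℂ) u = 2 * Real.cos (d * θ)) :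
    let s : ℝ := Real.sin (d * θ) / Real.sin θ
    let t : ℝ := Real.sin (((d : ℝ) - 1) * θ) / Real.sin θ
    ‖v‖ ^ 2 + ‖u + (t : ℂ)‖ ^ 2 = s ^ 2 :=
  su2_norm_identity_general u v d θ hθ huv hu
end
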